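/- Suppose the Erdős pinned distance conjecture holds in $\mathbb{R}^d$: every finite $F \subseteq \mathbb{R}^d$ contains a point $x$ with $|\Delta_x(F)| \geq c|F|^{2/d}$. Then for any finite $E \subseteq \mathbb{R}^2$ (case $d = 2$) and any connected graph $G$ on $k+1$ vertices with $k + 1 \leq |E|/2$, the number of distinct $G$-distance vectors satisfies $|\Delta(G, E^{k+1})| \geq c' |E|^{k}$ for a constant $c'$ depending on $c$ and $k$. -/

import Mathlib

noncomputable instance : DecidableEq (EuclideanSpace ℝ (Fin 2)) := Classical.decEq _

/-- The set of `G`-distance vectors of tuples with entries in `E`. -/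
def graphDistSet {k : ℕ} (G : SimpleGraph (Fin (k + 1)))
    (E : Finset (EuclideanSpace ℝ (Fin 2))) : Set (G.edgeSet → ℝ) :=
  {F | ∃ x : Fin (k + 1) → EuclideanSpace ℝ (Fin 2), (∀ j, x j ∈ E) ∧
    ∀ e : G.edgeSet,
      F e = Sym2.lift ⟨fun i j => dist (x i) (x j), fun _ _ => dist_comm _ _⟩ (e : Sym2 (Fin (k + 1))) }

/-!
The pins of `E` with fewer than `c|E|/2` distinct distances to `E` form fewer than half of `E`:
otherwise the pinned bound applied to that set would produce a pin in it with at least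
`c|E|/2` distances. Induct on the number of vertices of `G`: remove a vertex `v` whose deletion
keeps `G` connected (a leaf of a spanning tree), realise the distance vectors of `G - v` inside
the rich pins, and send `v` to points of `E` at pairwise distinct distances from the image of a
neighbour `u` of `v`. The edge `uv` tells these extensions apart, so every vertex contributes a
factor of order `c|E|`, and the constant `(c / 2 ^ k) ^ k` absorbs the halvings.
-/

open Finset

variable {α V : Type*} [PseudoMetricSpace α]

def HasLinearPinnedDistances (α : Type*) [PseudoMetricSpace α] (c : ℝ) : Prop :=
  ∀ F : Finset α, F.Nonempty → ∃ x ∈ F, c * #F ≤ #(F.image (dist x))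

noncomputable def richPins (c : ℝ) (A : Finset α) : Finset α :=
  A.filter fun x => c * #A ≤ 2 * #(A.image (dist x))

theorem richPins_subset (c : ℝ) (A : Finset α) : richPins c A ⊆ A :=
  filter_subset _ A

theorem mem_richPins {c : ℝ} {A : Finset α} {x : α} :
    x ∈ richPins c A ↔ x ∈ A ∧ c * #A ≤ 2 * #(A.image (dist x)) :=
  mem_filter

theorem card_le_two_mul_card_richPins {c : ℝ} (hc : 0 ≤ c)
    (hpin : HasLinearPinnedDistances α c) (A : Finset α) : #A ≤ 2 * #(richPins c A) := by
  classical
  by_contra! hsmall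
  have hsplit : #(A \ richPins c A) + #(richPins c A) = #A :=
    card_sdiff_add_card_eq_card (richPins_subset c A)
  have hF : (#A : ℝ) ≤ 2 * #(A \ richPins c A) := by exact_mod_cast (by omega)
  obtain ⟨x, hxF, hx⟩ := hpin (A \ richPins c A) (card_pos.mp (by omega))
  have hxA : #((A \ richPins c A).image (dist x)) ≤ #(A.image (dist x)) :=
    card_le_card (image_subset_image sdiff_subset)
  have hrich : x ∈ richPins c A := by
    refine mem_richPins.mpr ⟨(mem_sdiff.mp hxF).1, ?_⟩
    calc c * #A ≤ 2 * (c * #(A \ richPins c A)) := by nlinarith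
      _ ≤ 2 * #(A.image (dist x)) := by gcongr; exact hx.trans (by exact_mod_cast hxA)
  exact (mem_sdiff.mp hxF).2 hrich

theorem exists_injective_dist_of_le_card {x : α} {E : Finset α} {m : ℕ}
    (hm : m ≤ #(E.image (dist x))) :
    ∃ y : Fin m → α, (∀ s, y s ∈ E) ∧ Function.Injective fun s => dist x (y s) := by
  obtain ⟨T, hTsub, hTcard⟩ := exists_subset_card_eq hm
  have hpre : ∀ s, ∃ y ∈ E, dist x y = T.orderEmbOfFin hTcard s :=
    fun s => mem_image.mp (hTsub (T.orderEmbOfFin_mem hTcard s))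
  choose y hyE hy using hpre
  refine ⟨y, hyE, fun s t hst => (T.orderEmbOfFin hTcard).injective ?_⟩
  simpa only [hy] using hst

def edgeDists (G : SimpleGraph V) (x : V → α) (e : G.edgeSet) : ℝ :=
  Sym2.lift ⟨fun i j => dist (x i) (x j), fun _ _ => dist_comm _ _⟩ e

def distVectors (G : SimpleGraph V) (E : Finset α) : Set (G.edgeSet → ℝ) :=
  edgeDists G '' Set.univ.pi fun _ => (E : Set α)

theorem edgeDists_mk (G : SimpleGraph V) (x : V → α) {u v : V} (h : G.Adj u v) :
    edgeDists G x ⟨s(u, v), h⟩ = dist (x u) (x v) := rfl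

theorem edgeDists_induce_mapEdgeSet (G : SimpleGraph V) (s : Set V) (x : V → α)
    (e : (G.induce s).edgeSet) :
    edgeDists G x ((SimpleGraph.Embedding.induce s).mapEdgeSet e) =
      edgeDists (G.induce s) (x ∘ (↑)) e := by
  obtain ⟨e, he⟩ := e
  induction e using Sym2.ind
  rfl

theorem finite_distVectors [Finite V] (G : SimpleGraph V) (E : Finset α) :
    (distVectors G E).Finite :=
  (Set.Finite.pi fun _ => E.finite_toSet).image _

theorem ncard_distVectors_induce_mul_le [Finite V] {G : SimpleGraph V} {u v : V} (huv : G.Adj u v)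
    {E P : Finset α} (hPE : P ⊆ E) {m : ℕ} (hm : ∀ x ∈ P, m ≤ #(E.image (dist x))) :
    (distVectors (G.induce {v}ᶜ) P).ncard * m ≤ (distVectors G E).ncard := by
  classical
  set D := distVectors (G.induce {v}ᶜ) P
  have hrealize : ∀ F : D, ∃ x : ({v}ᶜ : Set V) → α,
      (∀ w, x w ∈ P) ∧ edgeDists (G.induce _) x = F := fun F => by
    obtain ⟨x, hx, hxF⟩ := F.2
    exact ⟨x, fun w => hx w trivial, hxF⟩
  choose x hxP hxF using hrealize
  have hu : u ∈ ({v}ᶜ : Set V) := huv.ne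
  choose y hyE hyinj using fun F : D => exists_injective_dist_of_le_card (hm _ (hxP F ⟨u, hu⟩))
  let z (F : D) (s : Fin m) : V → α := fun w => if h : w = v then y F s else x F ⟨w, h⟩
  have hz_restrict (F : D) (s : Fin m) : z F s ∘ (↑) = x F := by
    funext w
    exact dif_neg w.2
  -- Restricting to the edges of `G - v` recovers `F`, and the edge `uv` then recovers `s`.
  have hinj : Function.Injective fun p : D × Fin m => edgeDists G (z p.1 p.2) := by
    rintro ⟨F₁, s₁⟩ ⟨F₂, s₂⟩ h
    have hF : F₁ = F₂ := by
      apply Subtype.ext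
      funext e
      simpa only [edgeDists_induce_mapEdgeSet, hz_restrict, hxF] using
        congrFun h ((SimpleGraph.Embedding.induce _).mapEdgeSet e)
    subst hF
    have := congrFun h ⟨s(u, v), huv⟩
    simp only [edgeDists_mk, z, dif_neg huv.ne] at this
    rw [hyinj F₁ this]
  have hrange : Set.range (fun p : D × Fin m => edgeDists G (z p.1 p.2)) ⊆ distVectors G E := by
    rintro _ ⟨⟨F, s⟩, rfl⟩
    refine ⟨z F s, fun w _ => ?_, rfl⟩
    by_cases hw : w = v
    · simpa [z, hw] using hyE F s
    · simpa [z, hw] using hPE (hxP F ⟨w, hw⟩)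
  calc D.ncard * m = Nat.card (D × Fin m) := by simp [Nat.card_coe_set_eq]
    _ = (Set.range _).ncard := (Set.ncard_range_of_injective hinj).symm
    _ ≤ (distVectors G E).ncard := Set.ncard_le_ncard hrange (finite_distVectors G E)

theorem div_two_pow_pow_mul_pow_succ_le {c e : ℝ} (hc : 0 ≤ c) (he : 0 ≤ e) (n : ℕ) :
    (c / 2 ^ (n + 1)) ^ (n + 1) * e ^ (n + 1) ≤ (c / 2 ^ n) ^ n * (e / 2) ^ n * (c * e / 2) := by
  have h : (c / 2 ^ (n + 1)) ^ (n + 1) * e ^ (n + 1) =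
      (c / 2 ^ n) ^ n * (e / 2) ^ n * (c * e / 2 ^ (n + 1)) := by
    rw [div_pow, div_pow, div_pow, ← pow_mul, ← pow_mul]
    field_simp
    ring
  rw [h]
  gcongr
  exact le_self_pow₀ (by norm_num) n.succ_ne_zero

theorem le_ncard_distVectors_of_connected {c : ℝ} (hc : 0 ≤ c)
    (hpin : HasLinearPinnedDistances α c) {n : ℕ} [Finite V] (hV : Nat.card V = n + 1)
    {G : SimpleGraph V} (hG : G.Connected) {E : Finset α} (hE : E.Nonempty) :
    (c / 2 ^ n) ^ n * #E ^ n ≤ (distVectors G E).ncard := by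
  induction n generalizing V E with
  | zero =>
    obtain ⟨p, hp⟩ := hE
    have hne : (distVectors G E).Nonempty := ⟨_, fun _ => p, fun _ _ => hp, rfl⟩
    have h1 : 1 ≤ (distVectors G E).ncard := (Set.ncard_pos (finite_distVectors G E)).mpr hne
    simpa using h1
  | succ n ih =>
    have : Nontrivial V := Finite.one_lt_card_iff_nontrivial.mp (by omega)
    obtain ⟨v, hv⟩ := hG.exists_connected_induce_compl_singleton_of_finite_nontrivial
    obtain ⟨u, hvu⟩ := hG.preconnected.exists_adj_of_nontrivial v
    have hW : Nat.card ({v}ᶜ : Set V) = n + 1 := by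
      rw [Nat.card_coe_set_eq, Set.ncard_compl, Set.ncard_singleton]
      omega
    have hP : #E ≤ 2 * #(richPins c E) := card_le_two_mul_card_richPins hc hpin E
    have hPne : (richPins c E).Nonempty := card_pos.mp (by have := hE.card_pos; omega)
    have hrich : ∀ x ∈ richPins c E, ⌈c * #E / 2⌉₊ ≤ #(E.image (dist x)) := by
      intro x hx
      rw [Nat.ceil_le, div_le_iff₀ two_pos, mul_comm _ (2 : ℝ)]
      exact (mem_richPins.mp hx).2
    calc (c / 2 ^ (n + 1)) ^ (n + 1) * #E ^ (n + 1)
        ≤ (c / 2 ^ n) ^ n * (#E / 2) ^ n * (c * #E / 2) :=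
          div_two_pow_pow_mul_pow_succ_le hc (by positivity) n
      _ ≤ (c / 2 ^ n) ^ n * #(richPins c E) ^ n * ⌈c * #E / 2⌉₊ := by
        gcongr
        · rw [div_le_iff₀ two_pos, mul_comm]
          exact_mod_cast hP
        · exact Nat.le_ceil _
      _ ≤ (distVectors (G.induce {v}ᶜ) (richPins c E)).ncard * ⌈c * #E / 2⌉₊ := by
        gcongr
        exact ih hW hv hPne
      _ ≤ (distVectors G E).ncard := by
        exact_mod_cast ncard_distVectors_induce_mul_le hvu.symm (richPins_subset c E) hrich

theorem graphDistSet_eq_distVectors {k : ℕ} (G : SimpleGraph (Fin (k + 1)))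
    (E : Finset (EuclideanSpace ℝ (Fin 2))) : graphDistSet G E = distVectors G E := by
  ext F
  constructor
  · rintro ⟨x, hx, hF⟩
    exact ⟨x, fun j _ => hx j, funext fun e => (hF e).symm⟩
  · rintro ⟨x, hx, rfl⟩
    exact ⟨x, fun j => hx j trivial, fun _ => rfl⟩

theorem graph_distances_of_pinned_conjecture (c : ℝ) (hc : 0 < c)
    (pinned : ∀ F : Finset (EuclideanSpace ℝ (Fin 2)), F.Nonempty →
      ∃ x ∈ F, c * (F.card : ℝ) ^ ((2 : ℝ) / 2) ≤
        ((F.image (fun y => dist x y)).card : ℝ))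
    (k : ℕ) :
    ∃ c' > (0 : ℝ), ∀ E : Finset (EuclideanSpace ℝ (Fin 2)),
      ∀ G : SimpleGraph (Fin (k + 1)), G.Connected → 2 * (k + 1) ≤ E.card →
        c' * (E.card : ℝ) ^ k ≤ ((graphDistSet G E).ncard : ℝ) := by
  have hpin : HasLinearPinnedDistances (EuclideanSpace ℝ (Fin 2)) c := fun F hF => by
    have hexp : (2 : ℝ) / 2 = 1 := by norm_num
    simpa only [hexp, Real.rpow_one] using pinned F hF
  refine ⟨(c / 2 ^ k) ^ k, by positivity, fun E G hG hE => ?_⟩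
  rw [graphDistSet_eq_distVectors]
  exact le_ncard_distVectors_of_connected hc.le hpin (Nat.card_fin _) hG (card_pos.mp (by omega))
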